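/- arXiv:1910.13709 — 5 statements merged into one kernel-verified Lean document; each statement's English description precedes it below -/
import Mathlib

section
/- On the two-point space {0,1}, let L = λ(μ − Id) be an irreducible Markov generator with invariant probability μ and λ > 0, let φ = (l, −1/l) with l = √(μ(1)/μ(0)), and similarly φ̃ for another invariant probability μ̃. For ε > 0, let Λ_ε be the linear map fixing the constant function 1 and sending φ̃ to εφ. Then Λ_ε is a Markov kernel (i.e. its matrix has nonnegative entries and rows summing to 1) if and only if ε ≤ min(l/l̃, l̃/l), where l̃ = √(μ̃(1)/μ̃(0)). -/
/-- On the two point space `{0,1}`, with invariant probabilities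
`μ = (μ0, μ1)` and `μ' = (μ'0, μ'1)` (all weights positive), `l = √(μ1/μ0)`,
`l' = √(μ'1/μ'0)`, eigenfunctions `φ = (l, -1/l)` and `φ' = (l', -1/l')`, and `ε > 0`,
the linear map `Λ_ε` fixing `𝟙` and sending `φ'` to `ε φ`, whose matrix in the basis
`(𝟙_{0}, 𝟙_{1})` is `[[a, 1-a], [b, 1-b]]`, is a Markov kernel (all entries nonnegative,
rows summing to one) if and only if `ε ≤ min (l/l') (l'/l)`. -/
theorem twoPoint_markovian_iff
    (μ0 μ1 μ'0 μ'1 : ℝ)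
    (hμ0 : 0 < μ0) (hμ1 : 0 < μ1) (hμ'0 : 0 < μ'0) (hμ'1 : 0 < μ'1)
    (hμ : μ0 + μ1 = 1) (hμ' : μ'0 + μ'1 = 1)
    (l l' : ℝ) (hl : l = Real.sqrt (μ1 / μ0)) (hl' : l' = Real.sqrt (μ'1 / μ'0))
    (ε : ℝ) (hε : 0 < ε)
    (a b : ℝ)
    -- `Λ_ε` fixes `𝟙` (rows sum to one, built into the matrix `[[a,1-a],[b,1-b]]`)
    -- and sends `φ' = (l', -1/l')` to `ε • φ = (ε l, -ε/l)` :
    (ha : a * l' + (1 - a) * (-(1 / l')) = ε * l)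
    (hb : b * l' + (1 - b) * (-(1 / l')) = -(ε * (1 / l))) :
    (0 ≤ a ∧ a ≤ 1 ∧ 0 ≤ b ∧ b ≤ 1) ↔ ε ≤ min (l / l') (l' / l) := by
  have hlpos : 0 < l := hl ▸ Real.sqrt_pos.2 (div_pos hμ1 hμ0)
  have hl'pos : 0 < l' := hl' ▸ Real.sqrt_pos.2 (div_pos hμ'1 hμ'0)
  have hl0 : l ≠ 0 := ne_of_gt hlpos
  have hl'0 : l' ≠ 0 := ne_of_gt hl'pos
  field_simp at ha hb
  rw [le_min_iff, le_div_iff₀ hl'pos, le_div_iff₀ hlpos]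
  constructor
  · rintro ⟨h1, h2, h3, h4⟩
    constructor
    · nlinarith [mul_nonneg h3 hlpos.le,
        mul_nonneg (mul_nonneg h3 hlpos.le) (mul_self_nonneg l')]
    · nlinarith [mul_pos hl'pos hl'pos, mul_pos hlpos hl'pos]
  · rintro ⟨h1, h2⟩
    refine ⟨?_, ?_, ?_, ?_⟩
    · nlinarith [mul_pos hε (mul_pos hlpos hl'pos), mul_self_nonneg l']
    · nlinarith [mul_pos hl'pos hl'pos, mul_pos hlpos hl'pos]
    · nlinarith [mul_pos hlpos (mul_pos hl'pos hl'pos), mul_pos hlpos hl'pos]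
    · nlinarith [mul_pos hlpos (mul_pos hl'pos hl'pos), mul_pos hε hl'pos,
        mul_pos hlpos hl'pos]
end

section
/- On the two-point space with μ_∧ := min(μ(0), μ(1)), the optimal warm-up time for the interweaving between L = λ(μ − Id) and the isospectral generator with uniform invariant measure is t₀ = ln(1/μ_∧ − 1); i.e., with ε₀ = √(μ_∧/(1−μ_∧)), one has Λ̃_{ε₀} Λ_{ε₀} = exp(t₀ L) where Λ_{ε₀} and Λ̃_{ε₀} are the Markov kernels fixing 1 and scaling the nonconstant eigenfunctions by ε₀. -/
/-!
Both sides fix `𝟙` and scale the nonconstant eigenvector `φ`. On one side `A B φ = ε₀ A φ' = ε₀² φ`.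
On the other, `L v = (μ ⬝ᵥ v) 𝟙 - v` and `φ` has `μ`-mean zero, so `L φ = -φ` and
`exp (t₀ L) φ = e^{-t₀} φ` with `e^{-t₀} = μ_∧ / (1 - μ_∧) = ε₀²`. Since `𝟙` and `φ` span `ℝ²`,
the two matrices coincide.
-/

open Matrix

theorem Matrix.ext_of_mulVec_of_span_eq_top {R n ι : Type*} [CommSemiring R] [Fintype n]
    [DecidableEq n] {M N : Matrix n n R} {b : ι → n → R}
    (hb : Submodule.span R (Set.range b) = ⊤) (h : ∀ i, M *ᵥ b i = N *ᵥ b i) : M = N :=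
  Matrix.toLin'.injective <| LinearMap.ext_on_range hb h

theorem linearIndependent_one_pair {K : Type*} [Field K] {v : Fin 2 → K} (hv : v 0 ≠ v 1) :
    LinearIndependent K ![1, v] := by
  refine (LinearIndependent.pair_iff' one_ne_zero).2 fun a ha => hv ?_
  simp [← ha]

theorem span_one_pair_eq_top {K : Type*} [Field K] {v : Fin 2 → K} (hv : v 0 ≠ v 1) :
    Submodule.span K (Set.range ![1, v]) = ⊤ :=
  (linearIndependent_one_pair hv).span_eq_top_of_card_eq_finrank (by simp)

theorem Matrix.pow_mulVec_of_mulVec_eq_smul {R n : Type*} [CommSemiring R] [Fintype n]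
    [DecidableEq n] {L : Matrix n n R} {v : n → R} {c : R} (hv : L *ᵥ v = c • v) (k : ℕ) :
    (L ^ k) *ᵥ v = c ^ k • v := by
  induction k with
  | zero => simp
  | succ k ih => rw [pow_succ', ← mulVec_mulVec, ih, mulVec_smul, hv, smul_smul, pow_succ]

theorem Matrix.exp_smul_mulVec_of_mulVec_eq_smul {n : Type*} [Fintype n] [DecidableEq n]
    {L : Matrix n n ℝ} {v : n → ℝ} {c : ℝ} (hv : L *ᵥ v = c • v) (t : ℝ) :
    NormedSpace.exp (t • L) *ᵥ v = Real.exp (t * c) • v := by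
  let : NormedRing (Matrix n n ℝ) := Matrix.linftyOpNormedRing
  let : NormedAlgebra ℝ (Matrix n n ℝ) := Matrix.linftyOpNormedAlgebra
  have hmat := (NormedSpace.exp_series_hasSum_exp' (𝕂 := ℝ) (t • L)).map
    (mulVec.addMonoidHomLeft v) (continuous_id.matrix_mulVec continuous_const)
  have hscal := (NormedSpace.exp_series_hasSum_exp' (𝕂 := ℝ) (t * c)).smul_const v
  rw [← Real.exp_eq_exp_ℝ] at hscal
  refine hmat.unique (hscal.congr_fun fun k => ?_)
  change ((k.factorial : ℝ)⁻¹ • (t • L) ^ k) *ᵥ v = _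
  rw [smul_pow, smul_smul, smul_mulVec, pow_mulVec_of_mulVec_eq_smul hv, smul_smul, mul_pow]
  ring_nf

theorem Matrix.of_sub_ite_one_mulVec {R n : Type*} [CommRing R] [Fintype n] [DecidableEq n]
    (μ v : n → R) :
    (of fun i j => μ j - if i = j then (1 : R) else 0) *ᵥ v = fun i => μ ⬝ᵥ v - v i := by
  ext i
  simp [mulVec, dotProduct, sub_mul, ite_mul]

theorem twoPoint_dotProduct_eigenvector_eq_zero {μ : Fin 2 → ℝ} (hμ0 : 0 < μ 0) (hμ1 : 0 < μ 1) :
    μ ⬝ᵥ ![√(μ 1 / μ 0), -(1 / √(μ 1 / μ 0))] = 0 := by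
  have hl2 : √(μ 1 / μ 0) ^ 2 = μ 1 / μ 0 := Real.sq_sqrt (div_pos hμ1 hμ0).le
  simp only [dotProduct, Fin.sum_univ_two, Matrix.cons_val_zero, Matrix.cons_val_one]
  field_simp
  rw [hl2]
  field_simp
  ring

theorem Real.exp_neg_log_one_div_sub_one {m : ℝ} (hm0 : 0 < m) (hm1 : m < 1) :
    Real.exp (-Real.log (1 / m - 1)) = m / (1 - m) := by
  have : 0 < 1 / m - 1 := by rw [sub_pos, lt_div_iff₀ hm0, one_mul]; exact hm1
  rw [Real.exp_neg, Real.exp_log this]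
  field_simp

theorem twoPoint_warmup_time_general
    (μ : Fin 2 → ℝ) (hμ0 : 0 < μ 0) (hμ1 : 0 < μ 1) (hμ : μ 0 + μ 1 = 1)
    (l : ℝ) (hl : l = Real.sqrt (μ 1 / μ 0))
    (φ φ' : Fin 2 → ℝ) (hφ : φ = ![l, -(1 / l)])
    (μmin : ℝ) (hmin : μmin = min (μ 0) (μ 1))
    (ε₀ : ℝ) (hε₀ : ε₀ = Real.sqrt (μmin / (1 - μmin)))
    (t₀ : ℝ) (ht₀ : t₀ = Real.log (1 / μmin - 1))
    -- the generator `L = μ - Id` (with `λ = 1`)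
    (L : Matrix (Fin 2) (Fin 2) ℝ) (hL : L = Matrix.of fun i j => μ j - (if i = j then (1:ℝ) else 0))
    -- the Markov kernels `Λ_{ε₀}` and `Λ'_{ε₀}`, acting on functions by `mulVec`
    (A B : Matrix (Fin 2) (Fin 2) ℝ)
    (hA1 : A.mulVec (fun _ => 1) = fun _ => 1) (hAφ : A.mulVec φ' = ε₀ • φ)
    (hB1 : B.mulVec (fun _ => 1) = fun _ => 1) (hBφ : B.mulVec φ = ε₀ • φ') :
    A * B = NormedSpace.exp (t₀ • L) := by
  have hl0 : 0 < l := hl ▸ Real.sqrt_pos.2 (div_pos hμ1 hμ0)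
  have hmin0 : 0 < μmin := hmin ▸ lt_min hμ0 hμ1
  have hmin1 : μmin < 1 := hmin ▸ (min_le_left _ _).trans_lt (by linarith)
  have hL1 : L *ᵥ 1 = (0 : ℝ) • 1 := by
    rw [hL, of_sub_ite_one_mulVec]
    ext i
    simp [hμ]
  have hLφ : L *ᵥ φ = (-1 : ℝ) • φ := by
    rw [hL, of_sub_ite_one_mulVec, hφ, hl, twoPoint_dotProduct_eigenvector_eq_zero hμ0 hμ1]
    ext i
    simp
  have hdecay : Real.exp (t₀ * -1) = ε₀ ^ 2 := by
    rw [mul_neg_one, ht₀, Real.exp_neg_log_one_div_sub_one hmin0 hmin1, hε₀,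
      Real.sq_sqrt (div_pos hmin0 (by linarith)).le]
  have hspan : Submodule.span ℝ (Set.range ![1, φ]) = ⊤ := by
    refine span_one_pair_eq_top ?_
    rw [hφ]
    exact ((neg_neg_of_pos (one_div_pos.2 hl0)).trans hl0).ne'
  refine Matrix.ext_of_mulVec_of_span_eq_top hspan fun i => ?_
  fin_cases i
  · calc (A * B) *ᵥ 1 = A *ᵥ B *ᵥ fun _ => 1 := (mulVec_mulVec _ _ _).symm
      _ = 1 := by rw [hB1, hA1]; rfl
      _ = NormedSpace.exp (t₀ • L) *ᵥ 1 := by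
        rw [exp_smul_mulVec_of_mulVec_eq_smul hL1, mul_zero, Real.exp_zero, one_smul]
  · calc (A * B) *ᵥ φ = A *ᵥ B *ᵥ φ := (mulVec_mulVec _ _ _).symm
      _ = ε₀ ^ 2 • φ := by rw [hBφ, mulVec_smul, hAφ, smul_smul, sq]
      _ = NormedSpace.exp (t₀ • L) *ᵥ φ := by
        rw [exp_smul_mulVec_of_mulVec_eq_smul hLφ, hdecay]

/-- On the two-point space `{0,1}` (here `Fin 2`), with `λ = 1`,
`L = μ - Id` the generator with invariant probability `μ` (positive weights), `μ'` the
uniform measure, `μ_∧ = min (μ 0) (μ 1)`, `ε₀ = √(μ_∧/(1-μ_∧))` and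
`t₀ = ln(1/μ_∧ - 1)`, the composition `Λ'_{ε₀} Λ_{ε₀}` of the Markov kernels `Λ_{ε₀}`
(fixing `𝟙` and sending `φ' = (1,-1)` to `ε₀ φ`) and `Λ'_{ε₀}` (fixing `𝟙` and sending
`φ = (l, -1/l)` to `ε₀ φ'`) equals `exp (t₀ L)`. -/
theorem twoPoint_warmup_time
    (μ : Fin 2 → ℝ) (hμ0 : 0 < μ 0) (hμ1 : 0 < μ 1) (hμ : μ 0 + μ 1 = 1)
    (l : ℝ) (hl : l = Real.sqrt (μ 1 / μ 0))
    (φ φ' : Fin 2 → ℝ) (hφ : φ = ![l, -(1 / l)]) (hφ' : φ' = ![1, -1])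
    (μmin : ℝ) (hmin : μmin = min (μ 0) (μ 1))
    (ε₀ : ℝ) (hε₀ : ε₀ = Real.sqrt (μmin / (1 - μmin)))
    (t₀ : ℝ) (ht₀ : t₀ = Real.log (1 / μmin - 1))
    -- the generator `L = μ - Id` (with `λ = 1`)
    (L : Matrix (Fin 2) (Fin 2) ℝ) (hL : L = Matrix.of fun i j => μ j - (if i = j then (1:ℝ) else 0))
    -- the Markov kernels `Λ_{ε₀}` and `Λ'_{ε₀}`, acting on functions by `mulVec`
    (A B : Matrix (Fin 2) (Fin 2) ℝ)
    (hA1 : A.mulVec (fun _ => 1) = fun _ => 1) (hAφ : A.mulVec φ' = ε₀ • φ)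
    (hB1 : B.mulVec (fun _ => 1) = fun _ => 1) (hBφ : B.mulVec φ = ε₀ • φ')
    (hAmarkov : ∀ i j, 0 ≤ A i j) (hBmarkov : ∀ i j, 0 ≤ B i j) :
    A * B = NormedSpace.exp (t₀ • L) :=
  twoPoint_warmup_time_general μ hμ0 hμ1 hμ l hl φ φ' hφ μmin hmin ε₀ hε₀ t₀ ht₀ L hL A B hA1 hAφ
    hB1 hBφ
end

section
/- The adjoint of the beta multiplication kernel in the gamma-weighted L² spaces is given explicitly: for β, ε > 0 and bounded measurable g on ℝ₊, Λ*_{β,ε}[g](x) = (x^β/Γ(β)) ∫₀^∞ g((1+s)x) s^{β−1} e^{−sx} ds, where Λ_{β,ε}[f](x) = (Γ(β+ε)/(Γ(β)Γ(ε))) ∫₀¹ f(rx) r^{ε−1}(1−r)^{β−1} dr, and the adjoint is with respect to the duality ν_{β+ε}[g Λ_{β,ε}[f]] = ν_ε[f Λ*_{β,ε}[g]] for ν_a(dx) = x^{a−1}e^{−x}/Γ(a) dx. -/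
open MeasureTheory

/-- The gamma distribution `ν_a` with shape `a` and scale `1`, on `(0,∞)`. -/
noncomputable def gammaMeasure (a : ℝ) : Measure ℝ :=
  (volume.restrict (Set.Ioi (0 : ℝ))).withDensity
    fun x => ENNReal.ofReal (x ^ (a - 1) * Real.exp (-x) / Real.Gamma a)

/-- The beta multiplication kernel `Λ_{β,ε}`. -/
noncomputable def betaKernelOp (β ε : ℝ) (f : ℝ → ℝ) (x : ℝ) : ℝ :=
  (Real.Gamma (β + ε) / (Real.Gamma β * Real.Gamma ε)) *
    ∫ r in Set.Ioo (0 : ℝ) 1, f (r * x) * r ^ (ε - 1) * (1 - r) ^ (β - 1)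

/-- The kernel `Λ*_{β,ε}`. -/
noncomputable def betaKernelAdjOp (β : ℝ) (g : ℝ → ℝ) (x : ℝ) : ℝ :=
  x ^ β / Real.Gamma β *
    ∫ s in Set.Ioi (0 : ℝ), g ((1 + s) * x) * s ^ (β - 1) * Real.exp (-(s * x))

/-!
Let `Y ∼ ν_ε` and `U ∼ ν_β` be independent and `X = Y + U ∼ ν_{β+ε}`. Both sides equal
`E[g(X) f(Y)]`: given `X = x`, `Y / x` is Beta(ε, β)-distributed, which gives `Λ_{β,ε}`; given
`Y = y`, `X = y + U`, which after `U = s y` gives `Λ*_{β,ε}`. Analytically, the substitutions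
`y = r x` and `x = (1 + s) y` turn both integrands into inner integrals of `g(x) f(y)` against the
joint density of `(X, Y)` on the wedge `0 < y < x`, and Fubini exchanges the two orders.
-/

open Set Real Function

def lowerWedge : Set (ℝ × ℝ) := {p | 0 < p.2 ∧ p.2 < p.1}

theorem measurableSet_lowerWedge : MeasurableSet lowerWedge :=
  (measurableSet_lt measurable_const measurable_snd).inter
    (measurableSet_lt measurable_snd measurable_fst)

section

variable {E : Type*} [NormedAddCommGroup E] [NormedSpace ℝ E]

theorem setIntegral_Ioo_zero_one_comp_mul_right (F : ℝ → E) {x : ℝ} (hx : 0 < x) :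
    ∫ r in Ioo 0 1, F (r * x) = x⁻¹ • ∫ y in Ioo 0 x, F y := by
  rw [← integral_Ioc_eq_integral_Ioo, ← integral_Ioc_eq_integral_Ioo,
    ← intervalIntegral.integral_of_le zero_le_one, ← intervalIntegral.integral_of_le hx.le,
    intervalIntegral.integral_comp_mul_right _ hx.ne', zero_mul, one_mul]

theorem setIntegral_Ioi_comp_add_right (F : ℝ → E) (c : ℝ) :
    ∫ t in Ioi 0, F (t + c) = ∫ x in Ioi c, F x := by
  simpa [preimage_add_const_Ioi] using
    (measurePreserving_add_right volume c).setIntegral_preimage_emb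
      (measurableEmbedding_addRight c) F (Ioi c)

theorem setIntegral_Ioi_zero_comp_one_add_mul (F : ℝ → E) {y : ℝ} (hy : 0 < y) :
    ∫ s in Ioi 0, F ((1 + s) * y) = y⁻¹ • ∫ x in Ioi y, F x := by
  simp_rw [add_mul, one_mul, add_comm y]
  rw [integral_comp_mul_right_Ioi (fun t => F (t + y)) 0 hy, zero_mul,
    setIntegral_Ioi_comp_add_right]

theorem integral_Ioi_integral_Ioo_swap {F : ℝ → ℝ → E}
    (hF : IntegrableOn (uncurry F) lowerWedge) :
    ∫ x in Ioi 0, ∫ y in Ioo 0 x, F x y = ∫ y in Ioi 0, ∫ x in Ioi y, F x y := by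
  have hint : Integrable (uncurry fun x y => lowerWedge.indicator (uncurry F) (x, y))
      (volume.prod volume) := (integrable_indicator_iff measurableSet_lowerWedge).2 hF
  have hrow : ∀ x, ∫ y, lowerWedge.indicator (uncurry F) (x, y) = ∫ y in Ioo 0 x, F x y :=
    fun x => by
      rw [← integral_indicator measurableSet_Ioo]
      rfl
  have hcol : ∀ y, ∫ x, lowerWedge.indicator (uncurry F) (x, y) =
      (Ioi 0).indicator (fun y => ∫ x in Ioi y, F x y) y := fun y => by
    by_cases h : 0 < y
    · rw [indicator_of_mem (mem_Ioi.2 h), ← integral_indicator measurableSet_Ioi]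
      congr 1 with x
      simp [lowerWedge, indicator, h]
    · simp [lowerWedge, indicator, h]
  rw [setIntegral_eq_integral_of_forall_compl_eq_zero fun x hx => by
      rw [Ioo_eq_empty hx, Measure.restrict_empty, integral_zero_measure],
    ← integral_indicator measurableSet_Ioi]
  simp_rw [← hrow, ← hcol]
  exact integral_integral_swap hint

end

theorem integral_gammaMeasure {a : ℝ} (ha : 0 < a) (F : ℝ → ℝ) :
    ∫ x, F x ∂gammaMeasure a = ∫ x in Ioi 0, x ^ (a - 1) * exp (-x) / Gamma a * F x := by
  have hd : Measurable fun x : ℝ => ENNReal.ofReal (x ^ (a - 1) * exp (-x) / Gamma a) := by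
    fun_prop
  rw [gammaMeasure, integral_withDensity_eq_integral_toReal_smul hd
    (ae_of_all _ fun _ => ENNReal.ofReal_lt_top)]
  refine setIntegral_congr_fun measurableSet_Ioi fun x (hx : 0 < x) => ?_
  rw [ENNReal.toReal_ofReal (by positivity), smul_eq_mul]

theorem integral_Ioo_mul_rpow_mul_sub_rpow (f : ℝ → ℝ) (a b : ℝ) {x : ℝ} (hx : 0 < x) :
    ∫ y in Ioo 0 x, f y * y ^ (a - 1) * (x - y) ^ (b - 1) =
      x ^ (a + b - 1) * ∫ r in Ioo 0 1, f (r * x) * r ^ (a - 1) * (1 - r) ^ (b - 1) := by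
  have hsub := setIntegral_Ioo_zero_one_comp_mul_right
    (fun y => f y * y ^ (a - 1) * (x - y) ^ (b - 1)) hx
  rw [smul_eq_mul, eq_inv_mul_iff_mul_eq₀ hx.ne'] at hsub
  have hpow : x ^ (a + b - 1) = x * x ^ (a - 1) * x ^ (b - 1) := by
    rw [show a + b - 1 = 1 + (a - 1) + (b - 1) by ring, rpow_add hx, rpow_add hx, rpow_one]
  have hfactor : ∫ r in Ioo 0 1, f (r * x) * (r * x) ^ (a - 1) * (x - r * x) ^ (b - 1) =
      x ^ (a - 1) * x ^ (b - 1) *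
        ∫ r in Ioo 0 1, f (r * x) * r ^ (a - 1) * (1 - r) ^ (b - 1) := by
    rw [← integral_const_mul]
    refine setIntegral_congr_fun measurableSet_Ioo fun r (hr : r ∈ Ioo 0 1) => ?_
    rw [mul_rpow hr.1.le hx.le, show x - r * x = (1 - r) * x by ring,
      mul_rpow (sub_pos.2 hr.2).le hx.le]
    ring
  rw [← hsub, hfactor, hpow]
  ring

theorem integral_Ioi_mul_sub_rpow_mul_exp (g : ℝ → ℝ) (b : ℝ) {y : ℝ} (hy : 0 < y) :
    ∫ x in Ioi y, g x * (x - y) ^ (b - 1) * exp (-x) =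
      y ^ b * exp (-y) * ∫ s in Ioi 0, g ((1 + s) * y) * s ^ (b - 1) * exp (-(s * y)) := by
  have hsub := setIntegral_Ioi_zero_comp_one_add_mul
    (fun x => g x * (x - y) ^ (b - 1) * exp (-x)) hy
  rw [smul_eq_mul, eq_inv_mul_iff_mul_eq₀ hy.ne'] at hsub
  have hpow : y ^ b = y * y ^ (b - 1) := by
    rw [show b = 1 + (b - 1) by ring, rpow_add hy, rpow_one, add_sub_cancel_left]
  have hfactor :
      ∫ s in Ioi 0, g ((1 + s) * y) * ((1 + s) * y - y) ^ (b - 1) * exp (-((1 + s) * y)) =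
        y ^ (b - 1) * exp (-y) *
          ∫ s in Ioi 0, g ((1 + s) * y) * s ^ (b - 1) * exp (-(s * y)) := by
    rw [← integral_const_mul]
    refine setIntegral_congr_fun measurableSet_Ioi fun s (hs : 0 < s) => ?_
    rw [show (1 + s) * y - y = s * y by ring, mul_rpow hs.le hy.le,
      show -((1 + s) * y) = -y + -(s * y) by ring, exp_add]
    ring
  rw [← hsub, hfactor, hpow]
  ring

noncomputable def gammaPairDensity (β ε x y : ℝ) : ℝ :=
  y ^ (ε - 1) * (x - y) ^ (β - 1) * exp (-x) / (Gamma β * Gamma ε)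

theorem gammaDensity_mul_betaKernelOp {β ε : ℝ} (hβε : 0 < β + ε) (f g : ℝ → ℝ) {x : ℝ}
    (hx : 0 < x) :
    x ^ (β + ε - 1) * exp (-x) / Gamma (β + ε) * (g x * betaKernelOp β ε f x) =
      ∫ y in Ioo 0 x, g x * f y * gammaPairDensity β ε x y := by
  have hΓ := (Gamma_pos_of_pos hβε).ne'
  have hpull : ∫ y in Ioo 0 x, g x * f y * gammaPairDensity β ε x y =
      g x * exp (-x) / (Gamma β * Gamma ε) *
        ∫ y in Ioo 0 x, f y * y ^ (ε - 1) * (x - y) ^ (β - 1) := by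
    rw [← integral_const_mul]
    congr 1 with y
    rw [gammaPairDensity]
    ring
  rw [hpull, integral_Ioo_mul_rpow_mul_sub_rpow f ε β hx, add_comm ε β, betaKernelOp]
  field_simp

theorem gammaDensity_mul_betaKernelAdjOp (β ε : ℝ) (f g : ℝ → ℝ) {y : ℝ} (hy : 0 < y) :
    y ^ (ε - 1) * exp (-y) / Gamma ε * (f y * betaKernelAdjOp β g y) =
      ∫ x in Ioi y, g x * f y * gammaPairDensity β ε x y := by
  have hpull : ∫ x in Ioi y, g x * f y * gammaPairDensity β ε x y =
      f y * y ^ (ε - 1) / (Gamma β * Gamma ε) *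
        ∫ x in Ioi y, g x * (x - y) ^ (β - 1) * exp (-x) := by
    rw [← integral_const_mul]
    congr 1 with x
    rw [gammaPairDensity]
    ring
  rw [hpull, integral_Ioi_mul_sub_rpow_mul_exp g β hy, betaKernelAdjOp]
  ring

theorem integrableOn_gammaPairDensity {β ε : ℝ} (hβ : 0 < β) (hε : 0 < ε) :
    IntegrableOn (uncurry (gammaPairDensity β ε)) lowerWedge := by
  set γ : ℝ → ℝ → ℝ := fun a => (Ioi 0).indicator fun t => exp (-t) * t ^ (a - 1)
  have hγ : ∀ {a : ℝ}, 0 < a → Integrable (γ a) :=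
    fun ha => (integrable_indicator_iff measurableSet_Ioi).2 (GammaIntegral_convergent ha)
  have hprod : Integrable (fun q : ℝ × ℝ => γ ε q.1 * γ β q.2) (volume.prod volume) :=
    (hγ hε).mul_prod (hγ hβ)
  -- the shear `(x, y) ↦ (y, x - y)` maps the wedge onto the open quadrant, where the density
  -- is a product of two gamma densities
  have hshear :=
    (measurePreserving_prod_sub_swap volume volume).integrable_comp_of_integrable hprod
  rw [← integrable_indicator_iff measurableSet_lowerWedge]
  refine (hshear.div_const (Gamma β * Gamma ε)).congr (ae_of_all _ fun p => ?_)
  by_cases hy : 0 < p.2 <;> by_cases hxy : p.2 < p.1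
  · have hexp : exp (-p.2) * exp (-(p.1 - p.2)) = exp (-p.1) := by rw [← exp_add]; ring_nf
    simp only [comp_apply, γ, indicator_of_mem (mem_Ioi.2 hy),
      indicator_of_mem (mem_Ioi.2 (sub_pos.2 hxy))]
    rw [indicator_of_mem (show p ∈ lowerWedge from ⟨hy, hxy⟩), uncurry_apply_pair,
      gammaPairDensity, ← hexp]
    ring
  all_goals simp [γ, lowerWedge, hy, hxy]

theorem integrableOn_mul_mul_gammaPairDensity {β ε : ℝ} (hβ : 0 < β) (hε : 0 < ε)
    {f g : ℝ → ℝ} (hf : Measurable f) (hg : Measurable g)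
    (hfb : ∃ C, ∀ x, |f x| ≤ C) (hgb : ∃ C, ∀ x, |g x| ≤ C) :
    IntegrableOn (uncurry fun x y => g x * f y * gammaPairDensity β ε x y) lowerWedge := by
  obtain ⟨Cf, hCf⟩ := hfb
  obtain ⟨Cg, hCg⟩ := hgb
  refine (integrableOn_gammaPairDensity hβ hε).bdd_mul (c := Cg * Cf)
    ((hg.comp measurable_fst).mul (hf.comp measurable_snd)).aestronglyMeasurable
    (ae_of_all _ fun p => ?_)
  rw [norm_mul, Real.norm_eq_abs, Real.norm_eq_abs]
  exact mul_le_mul (hCg _) (hCf _) (abs_nonneg _) ((abs_nonneg _).trans (hCg 0))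

/-- The adjoint of the beta multiplication kernel `Λ_{β,ε}` with respect to
the gamma-weighted duality `ν_{β+ε}[g Λ_{β,ε}[f]] = ν_ε[f Λ*_{β,ε}[g]]` is given explicitly
by `Λ*_{β,ε}[g](x) = (x^β/Γ(β)) ∫₀^∞ g((1+s)x) s^{β-1} e^{-sx} ds`, for all bounded
measurable `f, g`. -/
theorem betaKernel_adjoint (β ε : ℝ) (hβ : 0 < β) (hε : 0 < ε)
    (f g : ℝ → ℝ) (hf : Measurable f) (hg : Measurable g)
    (hfb : ∃ C, ∀ x, |f x| ≤ C) (hgb : ∃ C, ∀ x, |g x| ≤ C) :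
    ∫ x, g x * betaKernelOp β ε f x ∂(gammaMeasure (β + ε)) =
      ∫ x, f x * betaKernelAdjOp β g x ∂(gammaMeasure ε) := by
  rw [integral_gammaMeasure (add_pos hβ hε), integral_gammaMeasure hε]
  calc ∫ x in Ioi 0, x ^ (β + ε - 1) * exp (-x) / Gamma (β + ε) * (g x * betaKernelOp β ε f x)
      = ∫ x in Ioi 0, ∫ y in Ioo 0 x, g x * f y * gammaPairDensity β ε x y :=
        setIntegral_congr_fun measurableSet_Ioi fun _ hx =>
          gammaDensity_mul_betaKernelOp (add_pos hβ hε) f g hx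
    _ = ∫ y in Ioi 0, ∫ x in Ioi y, g x * f y * gammaPairDensity β ε x y :=
        integral_Ioi_integral_Ioo_swap
          (integrableOn_mul_mul_gammaPairDensity hβ hε hf hg hfb hgb)
    _ = ∫ y in Ioi 0, y ^ (ε - 1) * exp (-y) / Gamma ε * (f y * betaKernelAdjOp β g y) :=
        setIntegral_congr_fun measurableSet_Ioi fun _ hy =>
          (gammaDensity_mul_betaKernelAdjOp β ε f g hy).symm
end

section
/- The subordinated symmetric Laguerre semigroup has polynomial eigenvalue decay: for β > 0 and t > 0, the operator P̃^{τ^{(β)}}_t f = Σ_{n≥0} c_n^t(β) c_n(β) ⟨f, L_n^{(β)}⟩_{ν_β} L_n^{(β)}, with c_n(β) = Γ(n+1)Γ(β+1)/Γ(n+β+1), is a self-adjoint contraction on L²(ν_β), and for all f ∈ L²(ν_β), Var_{ν_β}(P̃^{τ^{(β)}}_t[f]) ≤ (1+β)^{−2t} Var_{ν_β}(f). -/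
open MeasureTheory
open scoped RealInnerProductSpace

/-- The probability measure `ν_β(dx) = x^β e^{-x}/Γ(β+1) dx` on `(0,∞)`. -/
noncomputable def lagMeasure (β : ℝ) : Measure ℝ :=
  (volume.restrict (Set.Ioi (0 : ℝ))).withDensity fun x =>
    ENNReal.ofReal (x ^ β * Real.exp (-x) / Real.Gamma (β + 1))

/-- The Laguerre polynomial `L_n^{(β)}(x) = ∑_{r=0}^n (-1)^r binom(n+β, n-r) x^r/r!`. -/
noncomputable def laguerrePoly (β : ℝ) (n : ℕ) (x : ℝ) : ℝ :=
  ∑ r ∈ Finset.range (n + 1), (-1 : ℝ) ^ r *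
    (Real.Gamma (n + β + 1) / (Real.Gamma (r + β + 1) * (Nat.factorial (n - r)))) *
    x ^ r / Nat.factorial r

/-- `c_n(β) = Γ(n+1)Γ(β+1)/Γ(n+β+1)`. -/
noncomputable def lagC (β : ℝ) (n : ℕ) : ℝ :=
  Real.Gamma (n + 1) * Real.Gamma (β + 1) / Real.Gamma (n + β + 1)

/-- The variance `Var_ν(f) = ∫ f² dν - (∫ f dν)²` of `f` under `ν_β`. -/
noncomputable def lagVar (β : ℝ) (f : ℝ → ℝ) : ℝ :=
  (∫ x, (f x) ^ 2 ∂(lagMeasure β)) - (∫ x, f x ∂(lagMeasure β)) ^ 2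

/-!
In the orthonormal family `e n = √(c_n) • L_n` the operator is diagonal with eigenvalues `c_n ^ t`
(the extra factor `c_n` in its series is absorbed by the normalisation). Since `c_0 = 1` and
`c_{n+1} / c_n = (n+1)/(n+1+β)`, these eigenvalues lie in `[0, 1]` and are at most
`c_1 ^ t = (1+β)^{-t}` for `n ≥ 1`. Symmetry of the diagonal form and Bessel's inequality give
self-adjointness and contraction. As `e 0 = 1`, the variance of `g` is `‖g‖² - ⟪g, e 0⟫²`, the
squared norm of the part of `g` orthogonal to `e 0`, which the operator shrinks by `(1+β)^{-t}`.
-/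

theorem tsum_inner_left {ι E : Type*} [NormedAddCommGroup E] [InnerProductSpace ℝ E]
    {x : ι → E} (hx : Summable x) (g : E) : ⟪∑' i, x i, g⟫ = ∑' i, ⟪x i, g⟫ := by
  simpa only [innerSL_apply_apply, real_inner_comm g] using (innerSL ℝ g).map_tsum hx

theorem sq_mul_le_sq_of_abs_le_one {a b : ℝ} (ha : |a| ≤ 1) : (a * b) ^ 2 ≤ b ^ 2 := by
  rw [mul_pow]
  exact mul_le_of_le_one_left (sq_nonneg b) ((sq_le_one_iff_abs_le_one a).2 ha)

noncomputable def diagonalOperator {ι E : Type*} [NormedAddCommGroup E] [InnerProductSpace ℝ E]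
    (e : ι → E) (μ : ι → ℝ) (f : E) : E :=
  ∑' i, (μ i * ⟪f, e i⟫) • e i

namespace Orthonormal

variable {ι E : Type*} [NormedAddCommGroup E] [InnerProductSpace ℝ E] {e : ι → E}

theorem summable_sq_inner (he : Orthonormal ℝ e) (f : E) :
    Summable fun i => ⟪f, e i⟫ ^ 2 := by
  simpa only [Real.norm_eq_abs, sq_abs, real_inner_comm f] using
    he.inner_products_summable (x := f)

theorem tsum_sq_inner_le (he : Orthonormal ℝ e) (f : E) : ∑' i, ⟪f, e i⟫ ^ 2 ≤ ‖f‖ ^ 2 := by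
  simpa only [Real.norm_eq_abs, sq_abs, real_inner_comm f] using he.tsum_inner_products_le f

theorem summable_smul [CompleteSpace E] (he : Orthonormal ℝ e) {b : ι → ℝ}
    (hb : Summable fun i => b i ^ 2) : Summable fun i => b i • e i := by
  have hb' : Summable fun i => ‖b i‖ ^ 2 := by simpa only [Real.norm_eq_abs, sq_abs] using hb
  simpa using (he.orthogonalFamily.summable_iff_norm_sq_summable b).2 hb'

theorem inner_tsum_smul_left (he : Orthonormal ℝ e) {b : ι → ℝ}
    (hb : Summable fun i => b i • e i) (j : ι) : ⟪∑' i, b i • e i, e j⟫ = b j := by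
  classical
  rw [tsum_inner_left hb, tsum_eq_single j fun i hij => by
    simp [real_inner_smul_left, orthonormal_iff_ite.1 he i j, hij]]
  simp [real_inner_smul_left, he.1 j]

theorem norm_sq_tsum_smul (he : Orthonormal ℝ e) {b : ι → ℝ}
    (hb : Summable fun i => b i • e i) : ‖∑' i, b i • e i‖ ^ 2 = ∑' i, b i ^ 2 := by
  rw [← real_inner_self_eq_norm_sq, tsum_inner_left hb]
  refine tsum_congr fun i => ?_
  rw [real_inner_smul_left, real_inner_comm, he.inner_tsum_smul_left hb, sq]

theorem summable_sq_mul_inner (he : Orthonormal ℝ e) {μ : ι → ℝ} (hμ : ∀ i, |μ i| ≤ 1) (f : E) :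
    Summable fun i => (μ i * ⟪f, e i⟫) ^ 2 :=
  (he.summable_sq_inner f).of_nonneg_of_le (fun _ => sq_nonneg _)
    fun i => sq_mul_le_sq_of_abs_le_one (hμ i)

section DiagonalOperator

variable [CompleteSpace E] {μ : ι → ℝ}

theorem summable_diagonalOperator (he : Orthonormal ℝ e) (hμ : ∀ i, |μ i| ≤ 1) (f : E) :
    Summable fun i => (μ i * ⟪f, e i⟫) • e i :=
  he.summable_smul (he.summable_sq_mul_inner hμ f)

theorem inner_diagonalOperator_left (he : Orthonormal ℝ e) (hμ : ∀ i, |μ i| ≤ 1) (f g : E) :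
    ⟪diagonalOperator e μ f, g⟫ = ∑' i, μ i * ⟪f, e i⟫ * ⟪g, e i⟫ := by
  rw [diagonalOperator, tsum_inner_left (he.summable_diagonalOperator hμ f)]
  exact tsum_congr fun i => by rw [real_inner_smul_left, real_inner_comm g]

theorem inner_diagonalOperator_comm (he : Orthonormal ℝ e) (hμ : ∀ i, |μ i| ≤ 1) (f g : E) :
    ⟪diagonalOperator e μ f, g⟫ = ⟪f, diagonalOperator e μ g⟫ := by
  rw [real_inner_comm (diagonalOperator e μ g), he.inner_diagonalOperator_left hμ,
    he.inner_diagonalOperator_left hμ]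
  exact tsum_congr fun i => by ring

theorem inner_diagonalOperator_self (he : Orthonormal ℝ e) (hμ : ∀ i, |μ i| ≤ 1) (f : E)
    (j : ι) : ⟪diagonalOperator e μ f, e j⟫ = μ j * ⟪f, e j⟫ :=
  he.inner_tsum_smul_left (he.summable_diagonalOperator hμ f) j

theorem norm_sq_diagonalOperator (he : Orthonormal ℝ e) (hμ : ∀ i, |μ i| ≤ 1) (f : E) :
    ‖diagonalOperator e μ f‖ ^ 2 = ∑' i, (μ i * ⟪f, e i⟫) ^ 2 :=
  he.norm_sq_tsum_smul (he.summable_diagonalOperator hμ f)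

theorem norm_diagonalOperator_le (he : Orthonormal ℝ e) (hμ : ∀ i, |μ i| ≤ 1) (f : E) :
    ‖diagonalOperator e μ f‖ ≤ ‖f‖ := by
  refine pow_le_pow_iff_left₀ (norm_nonneg _) (norm_nonneg f) two_ne_zero |>.1 ?_
  calc ‖diagonalOperator e μ f‖ ^ 2 = ∑' i, (μ i * ⟪f, e i⟫) ^ 2 :=
        he.norm_sq_diagonalOperator hμ f
    _ ≤ ∑' i, ⟪f, e i⟫ ^ 2 :=
        (he.summable_sq_mul_inner hμ f).tsum_le_tsum
          (fun i => sq_mul_le_sq_of_abs_le_one (hμ i)) (he.summable_sq_inner f)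
    _ ≤ ‖f‖ ^ 2 := he.tsum_sq_inner_le f

theorem norm_sq_sub_inner_sq_diagonalOperator_le (he : Orthonormal ℝ e) (hμ : ∀ i, |μ i| ≤ 1)
    {i₀ : ι} {r : ℝ} (hr : ∀ i ≠ i₀, |μ i| ≤ r) (f : E) :
    ‖diagonalOperator e μ f‖ ^ 2 - ⟪diagonalOperator e μ f, e i₀⟫ ^ 2
      ≤ r ^ 2 * (‖f‖ ^ 2 - ⟪f, e i₀⟫ ^ 2) := by
  classical
  have hDf := hasSum_ite_sub_hasSum (he.summable_sq_mul_inner hμ f).hasSum i₀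
  have hf := hasSum_ite_sub_hasSum (he.summable_sq_inner f).hasSum i₀
  have hterm : ∀ i, (if i = i₀ then 0 else (μ i * ⟪f, e i⟫) ^ 2)
      ≤ r ^ 2 * if i = i₀ then 0 else ⟪f, e i⟫ ^ 2 := by
    intro i
    split_ifs with hi
    · simp
    · rw [mul_pow]
      exact mul_le_mul_of_nonneg_right (sq_le_sq' (neg_le_of_abs_le (hr i hi))
        (le_of_abs_le (hr i hi))) (sq_nonneg _)
  calc ‖diagonalOperator e μ f‖ ^ 2 - ⟪diagonalOperator e μ f, e i₀⟫ ^ 2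
      = ∑' i, (μ i * ⟪f, e i⟫) ^ 2 - (μ i₀ * ⟪f, e i₀⟫) ^ 2 := by
        rw [he.norm_sq_diagonalOperator hμ, he.inner_diagonalOperator_self hμ]
    _ ≤ r ^ 2 * (∑' i, ⟪f, e i⟫ ^ 2 - ⟪f, e i₀⟫ ^ 2) := by
        rw [← hDf.tsum_eq, ← hf.tsum_eq, ← tsum_mul_left]
        exact hDf.summable.tsum_le_tsum hterm (hf.summable.mul_left _)
    _ ≤ r ^ 2 * (‖f‖ ^ 2 - ⟪f, e i₀⟫ ^ 2) := by
        gcongr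
        exact he.tsum_sq_inner_le f

end DiagonalOperator

end Orthonormal

namespace MeasureTheory.L2

variable {α : Type*} [MeasurableSpace α] {μ : Measure α}

theorem integral_sq_eq_norm_sq (g : Lp ℝ 2 μ) : ∫ x, g x ^ 2 ∂μ = ‖g‖ ^ 2 := by
  rw [← real_inner_self_eq_norm_sq, inner_def]
  simp only [RCLike.inner_apply, conj_trivial, sq]

theorem integral_eq_inner_of_ae_eq_one {u : Lp ℝ 2 μ} (hu : u =ᵐ[μ] 1) (g : Lp ℝ 2 μ) :
    ∫ x, g x ∂μ = ⟪g, u⟫ := by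
  rw [inner_def]
  refine integral_congr_ae ?_
  filter_upwards [hu] with x hx
  simp [hx]

end MeasureTheory.L2

theorem lagVar_eq_norm_sq_sub_inner_sq {β : ℝ} {u : Lp ℝ 2 (lagMeasure β)}
    (hu : u =ᵐ[lagMeasure β] 1) (g : Lp ℝ 2 (lagMeasure β)) :
    lagVar β g = ‖g‖ ^ 2 - ⟪g, u⟫ ^ 2 := by
  rw [lagVar, L2.integral_sq_eq_norm_sq, L2.integral_eq_inner_of_ae_eq_one hu]

section LaguerreConstants

variable {β : ℝ}

theorem laguerrePoly_zero (hβ : -1 < β) (x : ℝ) : laguerrePoly β 0 x = 1 := by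
  have : Real.Gamma (β + 1) ≠ 0 := (Real.Gamma_pos_of_pos (by linarith)).ne'
  simp [laguerrePoly, this]

theorem lagC_pos (hβ : -1 < β) (n : ℕ) : 0 < lagC β n := by
  unfold lagC
  have := Real.Gamma_pos_of_pos (by linarith : 0 < β + 1)
  have := Real.Gamma_pos_of_pos (by positivity : (0 : ℝ) < n + 1)
  have := Real.Gamma_pos_of_pos (by linarith [n.cast_nonneg (α := ℝ)] : 0 < (n : ℝ) + β + 1)
  positivity

theorem lagC_zero (hβ : -1 < β) : lagC β 0 = 1 := by
  simp [lagC, (Real.Gamma_pos_of_pos (by linarith : 0 < β + 1)).ne']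

theorem lagC_succ (hβ : -1 < β) (n : ℕ) :
    lagC β (n + 1) = lagC β n * ((n + 1) / (n + 1 + β)) := by
  have hn : (0 : ℝ) < n + β + 1 := by linarith [n.cast_nonneg (α := ℝ)]
  simp only [lagC, Nat.cast_add_one, add_right_comm _ (1 : ℝ) β,
    Real.Gamma_add_one (by positivity : (n : ℝ) + 1 ≠ 0), Real.Gamma_add_one hn.ne']
  have := (Real.Gamma_pos_of_pos hn).ne'
  field_simp

theorem lagC_antitone (hβ : 0 ≤ β) : Antitone (lagC β) :=
  antitone_nat_of_succ_le fun n => by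
    rw [lagC_succ (by linarith)]
    exact mul_le_of_le_one_right (lagC_pos (by linarith) n).le
      (div_le_one_of_le₀ (by linarith) (by positivity))

theorem lagC_le_one (hβ : 0 ≤ β) (n : ℕ) : lagC β n ≤ 1 :=
  lagC_zero (β := β) (by linarith) ▸ lagC_antitone hβ n.zero_le

theorem lagC_le_inv_one_add (hβ : 0 ≤ β) {n : ℕ} (hn : n ≠ 0) : lagC β n ≤ (1 + β)⁻¹ := by
  have h1 : lagC β 1 = (1 + β)⁻¹ := by
    rw [lagC_succ (by linarith), lagC_zero (by linarith)]
    simp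
  exact h1 ▸ lagC_antitone hβ (Nat.one_le_iff_ne_zero.2 hn)

end LaguerreConstants

section SubordinatedEigenvalues

variable {β t : ℝ}

theorem abs_lagC_rpow_le_one (hβ : 0 ≤ β) (ht : 0 ≤ t) (n : ℕ) : |lagC β n ^ t| ≤ 1 := by
  have hc : 0 ≤ lagC β n := (lagC_pos (by linarith) n).le
  rw [abs_of_nonneg (Real.rpow_nonneg hc t)]
  exact Real.rpow_le_one hc (lagC_le_one hβ n) ht

theorem abs_lagC_rpow_le (hβ : 0 ≤ β) (ht : 0 ≤ t) {n : ℕ} (hn : n ≠ 0) :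
    |lagC β n ^ t| ≤ (1 + β) ^ (-t) := by
  have hc : 0 ≤ lagC β n := (lagC_pos (by linarith) n).le
  rw [abs_of_nonneg (Real.rpow_nonneg hc t), Real.rpow_neg (by linarith),
    ← Real.inv_rpow (by linarith)]
  exact Real.rpow_le_rpow hc (lagC_le_inv_one_add hβ hn) ht

end SubordinatedEigenvalues

/-- For `β > 0` and `t > 0`, the subordinated symmetric Laguerre operator
`P̃^{τ^{(β)}}_t f = ∑_n c_n(β)^t c_n(β) ⟨f, L_n^{(β)}⟩ L_n^{(β)}` is a self-adjoint
contraction on `L²(ν_β)` and satisfies the variance decay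
`Var_{ν_β}(P̃^{τ^{(β)}}_t f) ≤ (1+β)^{-2t} Var_{ν_β}(f)`. Here the `L_n^{(β)}` are the
Laguerre polynomials, `(√c_n(β) L_n^{(β)})_n` being orthonormal in `L²(ν_β)`. -/
theorem subordinated_laguerre_contraction
    (β t : ℝ) (hβ : 0 < β) (ht : 0 < t)
    (Ln : ℕ → Lp ℝ 2 (lagMeasure β))
    (hLn : ∀ n, (Ln n : ℝ → ℝ) =ᵐ[lagMeasure β] fun x => laguerrePoly β n x)
    (hON : Orthonormal ℝ fun n => Real.sqrt (lagC β n) • Ln n)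
    (T : Lp ℝ 2 (lagMeasure β) →L[ℝ] Lp ℝ 2 (lagMeasure β))
    (hT : ∀ f, T f = ∑' n, ((lagC β n ^ t) * lagC β n * ⟪f, Ln n⟫) • Ln n) :
    (∀ f g, ⟪T f, g⟫ = ⟪f, T g⟫) ∧
    (∀ f, ‖T f‖ ≤ ‖f‖) ∧
    (∀ f : Lp ℝ 2 (lagMeasure β),
      lagVar β (T f) ≤ (1 + β) ^ (-(2 * t)) * lagVar β f) := by
  have hβ' : -1 < β := by linarith
  set e := fun n => Real.sqrt (lagC β n) • Ln n
  have hμ := abs_lagC_rpow_le_one hβ.le ht.le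
  have hTe : ∀ f, T f = diagonalOperator e (fun n => lagC β n ^ t) f := fun f => by
    refine (hT f).trans (tsum_congr fun n => ?_)
    have hc := Real.mul_self_sqrt (lagC_pos hβ' n).le
    rw [real_inner_smul_right, smul_smul]
    congr 1
    linear_combination (lagC β n ^ t * ⟪f, Ln n⟫) * hc.symm
  have he₀ : e 0 =ᵐ[lagMeasure β] 1 := by
    simp only [e, lagC_zero hβ', Real.sqrt_one, one_smul]
    filter_upwards [hLn 0] with x hx
    simp [hx, laguerrePoly_zero hβ']
  refine ⟨fun f g => ?_, fun f => ?_, fun f => ?_⟩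
  · simpa only [hTe] using hON.inner_diagonalOperator_comm hμ f g
  · simpa only [hTe] using hON.norm_diagonalOperator_le hμ f
  · have hr : ((1 + β) ^ (-t)) ^ 2 = (1 + β) ^ (-(2 * t)) := by
      rw [← Real.rpow_natCast, ← Real.rpow_mul (by linarith)]
      ring_nf
    rw [lagVar_eq_norm_sq_sub_inner_sq he₀, lagVar_eq_norm_sq_sub_inner_sq he₀, hTe, ← hr]
    exact hON.norm_sq_sub_inner_sq_diagonalOperator_le hμ
      (fun n hn => abs_lagC_rpow_le hβ.le ht.le hn) f
end

section
/- Transfer of cut-off upper bound via interweaving: let (P^{(n)}) and (P̃^{(n)}) be families of Markov semigroups with invariant probabilities ν^{(n)}, ν̃^{(n)}, linked for each n by a symmetric interweaving with deterministic warm-up time t₀^{(n)} satisfying t₀^{(n)}/t^{(n)} → 0. If d^{(n)}(t) := sup_{m₀} ‖m₀P^{(n)}_t − ν^{(n)}‖_tv satisfies d^{(n)}(rt^{(n)}) → 0 for every r > 1, then d̃^{(n)}, defined analogously for P̃^{(n)}, also satisfies d̃^{(n)}(rt^{(n)}) → 0 for every r > 1. The key inequality is d̃^{(n)}(t₀^{(n)}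 + t) ≤ d^{(n)}(t) for all t ≥ 0. -/
/-!
Starting from `m₀`, the interweaving relation `Λ' P_t Λ = P'_{t₀+t}` writes `m₀ P'_{t₀+t}` as the
image under `Λ` of the law `(m₀ Λ') P_t`, while `ν' = ν Λ`; since a Markov kernel does not
increase total variation, `d'(t₀ + t) ≤ d(t)`. As `t₀ = o(tₙ)`, for `1 < r' < r` we eventually
have `t₀ + r' tₙ ≤ r tₙ`, so monotonicity of `d'` gives `d'(r tₙ) ≤ d(r' tₙ) → 0`.
-/

open MeasureTheory ProbabilityTheory Filter

/-- Total variation discrepancy `‖m - ν‖_tv = sup_A (m(A) - ν(A))`. -/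
noncomputable def tvDist {α : Type*} [MeasurableSpace α] (m ν : Measure α) : ℝ :=
  sSup {r : ℝ | ∃ A : Set α, MeasurableSet A ∧ r = (m A).toReal - (ν A).toReal}

/-- The worst-case distance to equilibrium
`d(t) = sup_{m₀ ∈ P(V)} ‖m₀ P_t - ν‖_tv` of a Markov semigroup `P` at time `t`. -/
noncomputable def distEquil {α : Type*} [MeasurableSpace α]
    (P : ℝ → Kernel α α) (ν : Measure α) (t : ℝ) : ℝ :=
  sSup {r : ℝ | ∃ m₀ : Measure α, IsProbabilityMeasure m₀ ∧
    r = tvDist (m₀.bind fun x => P t x) ν}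

open Set Topology

section TotalVariation

variable {α β : Type*} [MeasurableSpace α] [MeasurableSpace β]

lemma tvDist_nonneg (m ν : Measure α) : 0 ≤ tvDist m ν :=
  Real.sSup_nonneg' ⟨0, ⟨∅, .empty, by simp⟩, le_rfl⟩

lemma measureReal_sub_le_measureReal_univ (m ν : Measure α) [IsFiniteMeasure m] (A : Set α) :
    m.real A - ν.real A ≤ m.real univ := by
  have hm : m.real A ≤ m.real univ := measureReal_mono (subset_univ A)
  have hν : 0 ≤ ν.real A := measureReal_nonneg
  linarith

lemma tvDist_le_measureReal_univ (m ν : Measure α) [IsFiniteMeasure m] :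
    tvDist m ν ≤ m.real univ :=
  csSup_le ⟨0, ∅, .empty, by simp⟩ <| by
    rintro _ ⟨A, -, rfl⟩
    exact measureReal_sub_le_measureReal_univ m ν A

lemma measureReal_sub_le_tvDist (m ν : Measure α) [IsFiniteMeasure m] {A : Set α}
    (hA : MeasurableSet A) : m.real A - ν.real A ≤ tvDist m ν :=
  le_csSup ⟨m.real univ, by rintro _ ⟨B, -, rfl⟩; exact measureReal_sub_le_measureReal_univ m ν B⟩
    ⟨A, hA, rfl⟩

lemma integral_sub_integral_le_tvDist (μ ν : Measure α) [IsFiniteMeasure μ] [IsFiniteMeasure ν]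
    {f : α → ℝ} (hf : Measurable f) (hf₀ : ∀ x, 0 ≤ f x) (hf₁ : ∀ x, f x ≤ 1) :
    ∫ x, f x ∂μ - ∫ x, f x ∂ν ≤ tvDist μ ν := by
  have layercake (ρ : Measure α) [IsFiniteMeasure ρ] :
      ∫ x, f x ∂ρ = ∫ t in Ioc 0 1, ρ.real {x | t ≤ f x} := by
    have hint : Integrable f ρ := Integrable.of_bound hf.aestronglyMeasurable 1
      (ae_of_all _ fun x => by rw [Real.norm_of_nonneg (hf₀ x)]; exact hf₁ x)
    exact hint.integral_eq_integral_Ioc_meas_le (ae_of_all _ hf₀) (ae_of_all _ hf₁)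
  have integrableOn_level (ρ : Measure α) [IsFiniteMeasure ρ] :
      IntegrableOn (fun t => ρ.real {x | t ≤ f x}) (Ioc 0 1) := by
    have hanti : AntitoneOn (fun t => ρ.real {x | t ≤ f x}) (Icc 0 1) :=
      fun s _ t _ hst => measureReal_mono fun x hx => le_trans hst hx
    exact (hanti.integrableOn_isCompact isCompact_Icc).mono_set Ioc_subset_Icc_self
  calc ∫ x, f x ∂μ - ∫ x, f x ∂ν
      = ∫ t in Ioc 0 1, (μ.real {x | t ≤ f x} - ν.real {x | t ≤ f x}) := by
        rw [layercake μ, layercake ν, integral_sub (integrableOn_level μ) (integrableOn_level ν)]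
    _ ≤ ∫ _ in Ioc (0 : ℝ) 1, tvDist μ ν :=
        integral_mono ((integrableOn_level μ).sub (integrableOn_level ν)) (integrable_const _)
          fun t => measureReal_sub_le_tvDist μ ν (hf measurableSet_Ici)
    _ = tvDist μ ν := by simp

lemma tvDist_comp_le (μ ν : Measure α) [IsFiniteMeasure μ] [IsFiniteMeasure ν]
    (κ : Kernel α β) [IsMarkovKernel κ] : tvDist (κ ∘ₘ μ) (κ ∘ₘ ν) ≤ tvDist μ ν :=
  csSup_le ⟨0, ∅, .empty, by simp⟩ <| by
    rintro _ ⟨A, hA, rfl⟩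
    have comp_apply (ρ : Measure α) [IsFiniteMeasure ρ] :
        ((κ ∘ₘ ρ) A).toReal = ∫ x, (κ x).real A ∂ρ := by
      rw [Measure.bind_apply hA κ.aemeasurable,
        ← integral_toReal (κ.measurable_coe hA).aemeasurable (ae_of_all _ fun x => measure_lt_top _ _)]
      rfl
    rw [comp_apply μ, comp_apply ν]
    exact integral_sub_integral_le_tvDist μ ν (κ.measurable_coe hA).ennreal_toReal
      (fun _ => measureReal_nonneg) (fun _ => measureReal_le_one)

end TotalVariation

section DistanceToEquilibrium

variable {α β : Type*} [MeasurableSpace α] [MeasurableSpace β]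

lemma distEquil_nonneg (P : ℝ → Kernel α α) (ν : Measure α) (t : ℝ) : 0 ≤ distEquil P ν t :=
  Real.sSup_nonneg <| by
    rintro _ ⟨m₀, -, rfl⟩
    exact tvDist_nonneg _ _

lemma tvDist_le_distEquil (P : ℝ → Kernel α α) (ν : Measure α) {t : ℝ} [IsMarkovKernel (P t)]
    (m₀ : Measure α) [IsProbabilityMeasure m₀] : tvDist (P t ∘ₘ m₀) ν ≤ distEquil P ν t := by
  refine le_csSup ⟨1, ?_⟩ ⟨m₀, ‹_›, rfl⟩
  rintro _ ⟨m, hm, rfl⟩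
  simpa using tvDist_le_measureReal_univ (P t ∘ₘ m) ν

lemma distEquil_le_of_comp_eq {P : ℝ → Kernel α α} {P' : ℝ → Kernel β β} {Λ : Kernel α β}
    {Λ' : Kernel β α} [IsMarkovKernel Λ] [IsMarkovKernel Λ'] {ν : Measure α} [IsFiniteMeasure ν]
    {ν' : Measure β} (hν : Λ ∘ₘ ν = ν') {s t : ℝ} [IsMarkovKernel (P t)]
    (h : Λ ∘ₖ (P t ∘ₖ Λ') = P' s) : distEquil P' ν' s ≤ distEquil P ν t := by
  refine Real.sSup_le ?_ (distEquil_nonneg P ν t)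
  rintro _ ⟨m₀, hm₀, rfl⟩
  calc tvDist (P' s ∘ₘ m₀) ν'
      = tvDist (Λ ∘ₘ (P t ∘ₘ (Λ' ∘ₘ m₀))) (Λ ∘ₘ ν) := by
        rw [← h, hν, Measure.comp_assoc, Measure.comp_assoc, Kernel.comp_assoc]
    _ ≤ tvDist (P t ∘ₘ (Λ' ∘ₘ m₀)) ν := tvDist_comp_le _ _ Λ
    _ ≤ distEquil P ν t := tvDist_le_distEquil P ν _

end DistanceToEquilibrium

lemma cutoff_upper_bound_of_le_shift {d d' : ℕ → ℝ → ℝ} {t₀ tn : ℕ → ℝ} (htn : ∀ n, 0 < tn n)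
    (hratio : Tendsto (fun n => t₀ n / tn n) atTop (𝓝 0))
    (hanti' : ∀ n, AntitoneOn (d' n) (Ici 0)) (hnonneg : ∀ n t, 0 ≤ d' n t)
    (hshift : ∀ n t, 0 ≤ t → d' n (t₀ n + t) ≤ d n t)
    (hup : ∀ r : ℝ, 1 < r → Tendsto (fun n => d n (r * tn n)) atTop (𝓝 0))
    {r : ℝ} (hr : 1 < r) : Tendsto (fun n => d' n (r * tn n)) atTop (𝓝 0) := by
  set r' := (1 + r) / 2 with hr'_def
  have hr' : 1 < r' := by linarith
  have hgap : 0 < r - r' := by linarith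
  have hle : ∀ᶠ n in atTop, d' n (r * tn n) ≤ d n (r' * tn n) := by
    filter_upwards [hratio.eventually (Ioo_mem_nhds (neg_neg_of_pos hgap) hgap)] with n hn
    have hlo : -(r - r') * tn n < t₀ n := (lt_div_iff₀ (htn n)).mp hn.1
    have hhi : t₀ n < (r - r') * tn n := (div_lt_iff₀ (htn n)).mp hn.2
    have hpos : 0 ≤ r' * tn n := mul_nonneg (by linarith) (htn n).le
    calc d' n (r * tn n) ≤ d' n (t₀ n + r' * tn n) :=
          hanti' n (mem_Ici.2 (by nlinarith [htn n])) (mem_Ici.2 (by nlinarith [htn n]))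
            (by nlinarith)
      _ ≤ d n (r' * tn n) := hshift n _ hpos
  exact tendsto_of_tendsto_of_tendsto_of_le_of_le' tendsto_const_nhds (hup r' hr')
    (Eventually.of_forall fun n => hnonneg n _) hle

theorem cutoff_transfer_general
    {V W : ℕ → Type*} [∀ n, MeasurableSpace (V n)] [∀ n, MeasurableSpace (W n)]
    (P : ∀ n, ℝ → Kernel (V n) (V n)) (P' : ∀ n, ℝ → Kernel (W n) (W n))
    (Λ : ∀ n, Kernel (V n) (W n)) (Λ' : ∀ n, Kernel (W n) (V n))
    [∀ n t, IsMarkovKernel (P n t)]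
    [∀ n, IsMarkovKernel (Λ n)] [∀ n, IsMarkovKernel (Λ' n)]
    (ν : ∀ n, Measure (V n)) (ν' : ∀ n, Measure (W n))
    [∀ n, IsProbabilityMeasure (ν n)]
    (hνΛ : ∀ n, ((ν n).bind fun x => Λ n x) = ν' n)
    -- symmetric interweaving with deterministic warm-up time `t₀ n` :
    -- `Λ P'_s Λ' = P_{t₀+s}` and `Λ' P_s Λ = P'_{t₀+s}`
    (t₀ : ℕ → ℝ)
    (hintw' : ∀ n, ∀ s : ℝ, 0 ≤ s → ∀ y : W n,
      ((((Λ' n) y).bind fun x => P n s x).bind fun x => Λ n x) = P' n (t₀ n + s) y)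
    -- the distances to equilibrium are nonincreasing in time
    (hanti' : ∀ n, AntitoneOn (distEquil (P' n) (ν' n)) (Set.Ici 0))
    -- cut-off times
    (tn : ℕ → ℝ) (htn : ∀ n, 0 < tn n)
    (hratio : Tendsto (fun n => t₀ n / tn n) atTop (nhds 0))
    -- cut-off upper bound for the family `P`
    (hup : ∀ r : ℝ, 1 < r →
      Tendsto (fun n => distEquil (P n) (ν n) (r * tn n)) atTop (nhds 0)) :
    -- key inequality and cut-off upper bound for the family `P'`
    (∀ n, ∀ t : ℝ, 0 ≤ t →
      distEquil (P' n) (ν' n) (t₀ n + t) ≤ distEquil (P n) (ν n) t) ∧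
    (∀ r : ℝ, 1 < r →
      Tendsto (fun n => distEquil (P' n) (ν' n) (r * tn n)) atTop (nhds 0)) := by
  have key : ∀ n, ∀ t : ℝ, 0 ≤ t →
      distEquil (P' n) (ν' n) (t₀ n + t) ≤ distEquil (P n) (ν n) t := fun n t ht =>
    distEquil_le_of_comp_eq (hνΛ n) <| Kernel.ext fun y => by
      rw [Kernel.comp_apply, Kernel.comp_apply]
      exact hintw' n t ht y
  exact ⟨key, fun r hr => cutoff_upper_bound_of_le_shift htn hratio hanti'
    (fun n => distEquil_nonneg _ _) key hup hr⟩

/-- Transfer of the cut-off upper bound via interweaving: if the families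
`(P^{(n)})` and `(P'^{(n)})`, with invariant probabilities `ν^{(n)}, ν'^{(n)}`, are linked
for each `n` by a symmetric interweaving with deterministic warm-up times `t₀^{(n)}` with
`t₀^{(n)}/t^{(n)} → 0`, and `d^{(n)}(r t^{(n)}) → 0` for every `r > 1`, then also
`d'^{(n)}(r t^{(n)}) → 0` for every `r > 1`; the key inequality is
`d'^{(n)}(t₀^{(n)} + t) ≤ d^{(n)}(t)`. -/
theorem cutoff_transfer
    {V W : ℕ → Type*} [∀ n, MeasurableSpace (V n)] [∀ n, MeasurableSpace (W n)]
    (P : ∀ n, ℝ → Kernel (V n) (V n)) (P' : ∀ n, ℝ → Kernel (W n) (W n))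
    (Λ : ∀ n, Kernel (V n) (W n)) (Λ' : ∀ n, Kernel (W n) (V n))
    [∀ n t, IsMarkovKernel (P n t)] [∀ n t, IsMarkovKernel (P' n t)]
    [∀ n, IsMarkovKernel (Λ n)] [∀ n, IsMarkovKernel (Λ' n)]
    (ν : ∀ n, Measure (V n)) (ν' : ∀ n, Measure (W n))
    [∀ n, IsProbabilityMeasure (ν n)] [∀ n, IsProbabilityMeasure (ν' n)]
    (hP : ∀ n, ∀ s t : ℝ, 0 ≤ s → 0 ≤ t → P n (s + t) = P n s ∘ₖ P n t)
    (hP' : ∀ n, ∀ s t : ℝ, 0 ≤ s → 0 ≤ t → P' n (s + t) = P' n s ∘ₖ P' n t)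
    (hinv : ∀ n, ∀ t : ℝ, 0 ≤ t → ((ν n).bind fun x => P n t x) = ν n)
    (hinv' : ∀ n, ∀ t : ℝ, 0 ≤ t → ((ν' n).bind fun y => P' n t y) = ν' n)
    (hνΛ : ∀ n, ((ν n).bind fun x => Λ n x) = ν' n)
    (hν'Λ' : ∀ n, ((ν' n).bind fun y => Λ' n y) = ν n)
    -- symmetric interweaving with deterministic warm-up time `t₀ n` :
    -- `Λ P'_s Λ' = P_{t₀+s}` and `Λ' P_s Λ = P'_{t₀+s}`
    (t₀ : ℕ → ℝ) (ht₀ : ∀ n, 0 ≤ t₀ n)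
    (hintw : ∀ n, ∀ s : ℝ, 0 ≤ s → ∀ x : V n,
      ((((Λ n) x).bind fun y => P' n s y).bind fun y => Λ' n y) = P n (t₀ n + s) x)
    (hintw' : ∀ n, ∀ s : ℝ, 0 ≤ s → ∀ y : W n,
      ((((Λ' n) y).bind fun x => P n s x).bind fun x => Λ n x) = P' n (t₀ n + s) y)
    -- the distances to equilibrium are nonincreasing in time
    (hanti : ∀ n, AntitoneOn (distEquil (P n) (ν n)) (Set.Ici 0))
    (hanti' : ∀ n, AntitoneOn (distEquil (P' n) (ν' n)) (Set.Ici 0))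
    -- cut-off times
    (tn : ℕ → ℝ) (htn : ∀ n, 0 < tn n)
    (hratio : Tendsto (fun n => t₀ n / tn n) atTop (nhds 0))
    -- cut-off upper bound for the family `P`
    (hup : ∀ r : ℝ, 1 < r →
      Tendsto (fun n => distEquil (P n) (ν n) (r * tn n)) atTop (nhds 0)) :
    -- key inequality and cut-off upper bound for the family `P'`
    (∀ n, ∀ t : ℝ, 0 ≤ t →
      distEquil (P' n) (ν' n) (t₀ n + t) ≤ distEquil (P n) (ν n) t) ∧
    (∀ r : ℝ, 1 < r →
      Tendsto (fun n => distEquil (P' n) (ν' n) (r * tn n)) atTop (nhds 0)) :=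
  cutoff_transfer_general P P' Λ Λ' ν ν' hνΛ t₀ hintw' hanti' tn htn hratio hup
end
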